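/- arXiv:1104.1157 — 3 statements merged into one kernel-verified Lean document; each statement's English description precedes it below -/
import Mathlib

section
/- Consider a sequence of nonnegative reals r_m (representing ‖g_{k+m}‖) satisfying r_0 ≤ 1/(2M²L) and the recursion M²L·r_{m+1} ≤ (M²L·r_m)² + M²L·B for all m ≥ 0, where B ≥ 0 and δ ∈ (0,1/2) satisfy B + M²LB² ≤ δ/(4M²L). Then for all m ≥ 1: r_m ≤ 1/(2^{2^m} M²L) + B + (δ/(M²L))·(2^{2^m - 1} - 1)/2^{2^m}. -/
/-! With `s m = M²L r m` and `b = M²L B` the recursion reads `s (m+1) ≤ s m ² + b`, and one shows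
`s m ≤ (1 - δ) a_m + δ/2 + b` with `a_m = 2^(-2^m)`. The main term `x = (1 - δ) a_m + δ · ½` is a
convex combination, so `x² ≤ (1 - δ) a_m² + δ/4`; since `x ≤ ½`, the cross term `2xb` costs at most
`b`, and the leftover `b + b²` is absorbed by the remaining `δ/4`. The induction starts at `m = 0`,
where the bound is `½ + b`. -/

lemma sq_convexComb_le {t x y : ℝ} (ht₀ : 0 ≤ t) (ht₁ : t ≤ 1) :
    ((1 - t) * x + t * y) ^ 2 ≤ (1 - t) * x ^ 2 + t * y ^ 2 := by
  have hdiff : (1 - t) * x ^ 2 + t * y ^ 2 - ((1 - t) * x + t * y) ^ 2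
      = t * (1 - t) * (x - y) ^ 2 := by ring
  exact sub_nonneg.1 (hdiff ▸ by positivity [sub_nonneg.2 ht₁])

section QuadraticRecursion

variable {δ b : ℝ}

lemma sq_add_le_of_le_convexComb_add {a s : ℝ} (hδ₀ : 0 ≤ δ) (hδ₁ : δ ≤ 1) (hb : 0 ≤ b)
    (hbδ : b + b ^ 2 ≤ δ / 4) (ha : a ≤ 1 / 2) (hs_nonneg : 0 ≤ s)
    (hs : s ≤ (1 - δ) * a + δ / 2 + b) :
    s ^ 2 + b ≤ (1 - δ) * a ^ 2 + δ / 2 + b := by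
  set x := (1 - δ) * a + δ * (1 / 2) with hx
  have hx_le : x ≤ 1 / 2 := by nlinarith
  have hx_sq : x ^ 2 ≤ (1 - δ) * a ^ 2 + δ / 4 :=
    calc x ^ 2 ≤ (1 - δ) * a ^ 2 + δ * (1 / 2) ^ 2 := sq_convexComb_le hδ₀ hδ₁
      _ = (1 - δ) * a ^ 2 + δ / 4 := by ring
  have hcross : 2 * x * b ≤ b := by nlinarith
  calc s ^ 2 + b ≤ (x + b) ^ 2 + b := by gcongr; linarith
    _ = x ^ 2 + 2 * x * b + (b + b ^ 2) := by ring
    _ ≤ (1 - δ) * a ^ 2 + δ / 2 + b := by linarith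

theorem le_of_sq_add_recursion {s : ℕ → ℝ} (hδ₀ : 0 ≤ δ) (hδ₁ : δ ≤ 1) (hb : 0 ≤ b)
    (hbδ : b + b ^ 2 ≤ δ / 4) (hs_nonneg : ∀ m, 0 ≤ s m) (hs_zero : s 0 ≤ 1 / 2)
    (hrec : ∀ m, s (m + 1) ≤ s m ^ 2 + b) (m : ℕ) :
    s m ≤ (1 - δ) * (1 / 2) ^ 2 ^ m + δ / 2 + b := by
  induction m with
  | zero => linarith
  | succ m ih =>
    have ha : ((1 : ℝ) / 2) ^ 2 ^ m ≤ 1 / 2 :=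
      pow_le_of_le_one (by norm_num) (by norm_num) (pow_ne_zero _ two_ne_zero)
    calc s (m + 1) ≤ s m ^ 2 + b := hrec m
      _ ≤ (1 - δ) * (((1 : ℝ) / 2) ^ 2 ^ m) ^ 2 + δ / 2 + b :=
        sq_add_le_of_le_convexComb_add hδ₀ hδ₁ hb hbδ ha (hs_nonneg m) ih
      _ = (1 - δ) * (1 / 2) ^ 2 ^ (m + 1) + δ / 2 + b := by rw [pow_succ 2 m, pow_mul]

end QuadraticRecursion

lemma two_pow_pred_sub_one_div {n : ℕ} (hn : n ≠ 0) :
    ((2 : ℝ) ^ (n - 1) - 1) / 2 ^ n = 1 / 2 - 1 / 2 ^ n := by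
  obtain ⟨k, rfl⟩ := Nat.exists_eq_succ_of_ne_zero hn
  rw [Nat.succ_sub_one, pow_succ]
  field_simp

/-- quadratic convergence rate, Proposition 2: if r_0 ≤ 1/(2M²L),
M²L r_{m+1} ≤ (M²L r_m)² + M²L B, and B + M²LB² ≤ δ/(4M²L) with δ ∈ (0,1/2), then
r_m ≤ 1/(2^{2^m} M²L) + B + (δ/(M²L))(2^{2^m-1} - 1)/2^{2^m} for all m ≥ 1. -/
theorem stmt_7 (M L B δ : ℝ) (r : ℕ → ℝ)
    (hM : 0 < M) (hL : 0 < L) (hB : 0 ≤ B) (hδ0 : 0 < δ) (hδ : δ < 1 / 2)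
    (hr_nonneg : ∀ m, 0 ≤ r m)
    (hr0 : r 0 ≤ 1 / (2 * M ^ 2 * L))
    (hrec : ∀ m, M ^ 2 * L * r (m + 1) ≤ (M ^ 2 * L * r m) ^ 2 + M ^ 2 * L * B)
    (hBδ : B + M ^ 2 * L * B ^ 2 ≤ δ / (4 * M ^ 2 * L)) :
    ∀ m ≥ 1, r m ≤ 1 / (2 ^ 2 ^ m * M ^ 2 * L) + B
      + (δ / (M ^ 2 * L)) * ((2 ^ (2 ^ m - 1) - 1) / 2 ^ 2 ^ m) := by
  intro m _
  have hc : 0 < M ^ 2 * L := by positivity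
  have hbδ : M ^ 2 * L * B + (M ^ 2 * L * B) ^ 2 ≤ δ / 4 :=
    calc M ^ 2 * L * B + (M ^ 2 * L * B) ^ 2 = M ^ 2 * L * (B + M ^ 2 * L * B ^ 2) := by ring
      _ ≤ M ^ 2 * L * (δ / (4 * M ^ 2 * L)) := by gcongr
      _ = δ / 4 := by field_simp
  have hs_zero : M ^ 2 * L * r 0 ≤ 1 / 2 :=
    calc M ^ 2 * L * r 0 ≤ M ^ 2 * L * (1 / (2 * M ^ 2 * L)) := by gcongr
      _ = 1 / 2 := by field_simp
  have key := le_of_sq_add_recursion hδ0.le (by linarith) (mul_nonneg hc.le hB)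
    hbδ (fun m ↦ mul_nonneg hc.le (hr_nonneg m)) hs_zero hrec m
  rw [two_pow_pred_sub_one_div (pow_ne_zero _ two_ne_zero), ← mul_le_mul_iff_right₀ hc]
  rw [one_div_pow] at key
  refine key.trans_eq ?_
  field_simp
  ring
end

section
/- Under the assumptions of the quadratic convergence recursion (r_0 ≤ 1/(2M²L), M²L·r_{m+1} ≤ (M²L·r_m)² + M²L·B, and B + M²LB² ≤ δ/(4M²L) with δ ∈ (0,1/2)), the limit superior satisfies limsup_{m→∞} r_m ≤ B + δ/(2M²L). -/
/-- under the quadratic convergence recursion hypotheses,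
limsup_{m→∞} r_m ≤ B + δ/(2M²L). -/
theorem stmt_8 (M L B δ : ℝ) (r : ℕ → ℝ)
    (hM : 0 < M) (hL : 0 < L) (hB : 0 ≤ B) (hδ0 : 0 < δ) (hδ : δ < 1 / 2)
    (hr_nonneg : ∀ m, 0 ≤ r m)
    (hr0 : r 0 ≤ 1 / (2 * M ^ 2 * L))
    (hrec : ∀ m, M ^ 2 * L * r (m + 1) ≤ (M ^ 2 * L * r m) ^ 2 + M ^ 2 * L * B)
    (hBδ : B + M ^ 2 * L * B ^ 2 ≤ δ / (4 * M ^ 2 * L)) :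
    Filter.limsup r Filter.atTop ≤ B + δ / (2 * M ^ 2 * L) := by
  set c := M ^ 2 * L with hc_def
  have hc : 0 < c := by positivity
  have hr0' : r 0 ≤ 1 / (2 * c) := by
    rw [hc_def, show (2:ℝ) * (M ^ 2 * L) = 2 * M ^ 2 * L by ring]; exact hr0
  have hBδ' : B + c * B ^ 2 ≤ δ / (4 * c) := by
    rw [hc_def, show (4:ℝ) * (M ^ 2 * L) = 4 * M ^ 2 * L by ring]; exact hBδ
  have hgoal : B + δ / (2 * M ^ 2 * L) = B + δ / (2 * c) := by
    rw [hc_def]; ring_nf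
  rw [hgoal]
  -- c*B ≤ δ/4
  have hb : c * B ≤ δ / 4 := by
    have h1 : c * (B + c * B ^ 2) ≤ c * (δ / (4 * c)) :=
      mul_le_mul_of_nonneg_left hBδ' hc.le
    have h2 : c * (δ / (4 * c)) = δ / 4 := by field_simp
    nlinarith [sq_nonneg (c * B)]
  -- boundedness: c * r m ≤ 1/2
  have bound : ∀ m, c * r m ≤ 1 / 2 := by
    intro m
    induction m with
    | zero =>
      have h1 : c * r 0 ≤ c * (1 / (2 * c)) := mul_le_mul_of_nonneg_left hr0' hc.le
      have h2 : c * (1 / (2 * c)) = 1 / 2 := by field_simp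
      linarith
    | succ m ih =>
      have hs : 0 ≤ c * r m := mul_nonneg hc.le (hr_nonneg m)
      nlinarith [hrec m]
  -- key decay estimate
  have key : ∀ m, c * r m ≤ c * B + δ / 2 + (1 / 2 : ℝ) ^ m * (1 / 2) := by
    intro m
    induction m with
    | zero =>
      have hs : 0 ≤ c * B := mul_nonneg hc.le hB
      have h1 := bound 0
      norm_num
      nlinarith
    | succ m ih =>
      have hs : 0 ≤ c * r m := mul_nonneg hc.le (hr_nonneg m)
      have hp : (0:ℝ) < (1 / 2 : ℝ) ^ m := by positivity
      have hcontr : (c * r m) ^ 2 - δ / 2 ≤ (c * r m - (c * B + δ / 2)) / 2 := by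
        nlinarith [bound m, mul_nonneg hs (by linarith [bound m] : (0:ℝ) ≤ 1/2 - c * r m)]
      have hhalf : (1 / 2 : ℝ) ^ (m + 1) * (1 / 2) = ((1 / 2 : ℝ) ^ m * (1/2)) / 2 := by ring
      nlinarith [hrec m]
  have hub : ∀ m, r m ≤ B + δ / (2 * c) + (1 / 2 : ℝ) ^ m * (1 / (2 * c)) := by
    intro m
    have h1 := key m
    have h2 : c * (B + δ / (2 * c) + (1 / 2 : ℝ) ^ m * (1 / (2 * c)))
        = c * B + δ / 2 + (1 / 2 : ℝ) ^ m * (1 / 2) := by field_simp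
    have h3 : c * r m ≤ c * (B + δ / (2 * c) + (1 / 2 : ℝ) ^ m * (1 / (2 * c))) := by
      rw [h2]; exact h1
    exact le_of_mul_le_mul_left h3 hc
  have hbd : ∀ m, r m ≤ 1 / (2 * c) := by
    intro m
    have h1 := bound m
    have h3 : c * r m ≤ c * (1 / (2 * c)) := by
      rw [show c * (1 / (2 * c)) = 1 / 2 by field_simp]; exact h1
    exact le_of_mul_le_mul_left h3 hc
  have hcb : Filter.IsCoboundedUnder (· ≤ ·) Filter.atTop r :=
    Filter.isCoboundedUnder_le_of_le _ hr_nonneg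
  refine le_of_forall_pos_le_add ?_
  intro ε hε
  obtain ⟨N, hN⟩ := exists_pow_lt_of_lt_one (by positivity : (0:ℝ) < ε * (2 * c))
    (by norm_num : (1:ℝ)/2 < 1)
  refine Filter.limsup_le_of_le hcb ?_
  filter_upwards [Filter.eventually_ge_atTop N] with m hm
  have hmono : (1 / 2 : ℝ) ^ m ≤ (1 / 2 : ℝ) ^ N :=
    pow_le_pow_of_le_one (by norm_num) (by norm_num) hm
  have h4 : (1 / 2 : ℝ) ^ N * (1 / (2 * c)) ≤ ε := by
    rw [mul_one_div, div_le_iff₀ (by positivity : (0:ℝ) < 2 * c)]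
    linarith
  have h3 : (1 / 2 : ℝ) ^ m * (1 / (2 * c)) ≤ ε :=
    le_trans (mul_le_mul_of_nonneg_right hmono (by positivity)) h4
  linarith [hub m]
end

section
/- Suppose nonnegative reals satisfy ‖g_{k+1}‖ ≤ M²L‖g_k‖² + B, ‖g_k‖ ≤ 1/(2M²L), σ ∈ (0,1/2), and |η_j − ‖g_j‖| ≤ γ/2 for j = k, k+1. Then η_{k+1} ≤ (1−σ)η_k + B + γ, i.e., the backtracking condition is satisfied with unit stepsize. -/
/-- Proposition 3: if ‖g_{k+1}‖ ≤ M²L‖g_k‖² + B, ‖g_k‖ ≤ 1/(2M²L),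
σ ∈ (0,1/2), and the approximate norms satisfy |η_j − ‖g_j‖| ≤ γ/2 for j = k, k+1,
then η_{k+1} ≤ (1−σ)η_k + B + γ, i.e. unit stepsize passes the backtracking test. -/
theorem stmt_9 (M L B γ σ gk gk1 ηk ηk1 : ℝ)
    (hM : 0 < M) (hL : 0 < L) (hB : 0 ≤ B) (hγ : 0 ≤ γ)
    (hσ0 : 0 < σ) (hσ : σ < 1 / 2)
    (hgk : 0 ≤ gk) (hgk1 : 0 ≤ gk1)
    (hdescent : gk1 ≤ M ^ 2 * L * gk ^ 2 + B)
    (hsmall : gk ≤ 1 / (2 * M ^ 2 * L))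
    (hηk : |ηk - gk| ≤ γ / 2) (hηk1 : |ηk1 - gk1| ≤ γ / 2) :
    ηk1 ≤ (1 - σ) * ηk + B + γ := by
  have h1 := abs_le.mp hηk
  have h2 := abs_le.mp hηk1
  have hML : (0:ℝ) < 2 * M ^ 2 * L := by positivity
  have hs : gk * (2 * M ^ 2 * L) ≤ 1 := (le_div_iff₀ hML).mp hsmall
  have hq : M ^ 2 * L * gk ^ 2 ≤ (1/2) * gk := by nlinarith [mul_le_mul_of_nonneg_right hs hgk]
  nlinarith [h1.1, h1.2, h2.1, h2.2, mul_nonneg hσ0.le hγ, mul_nonneg hσ0.le hgk]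
end
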